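/- Let f : ℝⁿ → ℝ ∪ {+∞} be finite and locally lower semicontinuous at x̄, let θ ∈ [0,1), let h be the 1/(1−θ)-th subderivative h(w) := liminf_{τ↓0, w'→w}(f(x̄+τw') − f(x̄))/((1−θ)τ^{1/(1−θ)}), and let W := {w : 0 < h(w) < +∞}. If W ≠ ∅, then f cannot satisfy the Kurdyka–Łojasiewicz property at x̄ with any exponent θ' ∈ [0, θ). -/

import Mathlib

open Filter Topology
open scoped ENNReal NNReal Pointwise

noncomputable section

abbrev En (n : ℕ) := EuclideanSpace ℝ (Fin n)

/-- Regular (Fréchet) subgradients of an extended-real-valued function. -/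
def RegSubgrad {n : ℕ} (f : En n → EReal) (x : En n) : Set (En n) :=
  {v | ∀ ε : ℝ, 0 < ε → ∃ δ : ℝ, 0 < δ ∧ ∀ u : En n, ‖u - x‖ < δ → u ≠ x →
      f x + (((inner ℝ v (u - x) : ℝ) - ε * ‖u - x‖ : ℝ) : EReal) ≤ f u}

/-- Limiting (Mordukhovich) subgradients. -/
def LimSubgrad {n : ℕ} (f : En n → EReal) (x : En n) : Set (En n) :=
  {v | ∃ xk vk : ℕ → En n,
      Tendsto xk atTop (nhds x) ∧ Tendsto vk atTop (nhds v) ∧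
      Tendsto (fun k => f (xk k)) atTop (nhds (f x)) ∧
      ∀ k, vk k ∈ RegSubgrad f (xk k)}

/-- Outer limiting subgradients: limits of limiting subgradients taken at nearby
points where the function value is strictly larger and converges to `f x`. -/
def OuterSubgrad {n : ℕ} (f : En n → EReal) (x : En n) : Set (En n) :=
  {v | ∃ xk vk : ℕ → En n,
      Tendsto xk atTop (nhds x) ∧ Tendsto vk atTop (nhds v) ∧
      Tendsto (fun k => f (xk k)) atTop (nhds (f x)) ∧
      (∀ k, f x < f (xk k)) ∧ ∀ k, vk k ∈ LimSubgrad f (xk k)}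

/-- Distance from the origin to a set (`∞` for the empty set). -/
def DistZero {n : ℕ} (S : Set (En n)) : ℝ≥0∞ := EMetric.infEdist 0 S

/-- `f` is locally lower semicontinuous at `x`. -/
def LocallyLsc {n : ℕ} (f : En n → EReal) (x : En n) : Prop :=
  ∃ ε : ℝ, 0 < ε ∧ ∀ α : ℝ, (α : EReal) ≤ f x + (ε : ℝ) →
    IsClosed {y : En n | ‖y - x‖ ≤ ε ∧ f y ≤ (α : ℝ)}

/-- The `1/(1-θ)`-th subderivative of `f` at `x`. -/
def ThetaSubderiv {n : ℕ} (f : En n → EReal) (x : En n) (θ : ℝ) (w : En n) : EReal :=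
  Filter.liminf (fun p : ℝ × En n =>
      (((((1 - θ) * p.1 ^ (1 / (1 - θ)))⁻¹ : ℝ)) : EReal) * (f (x + p.1 • p.2) - f x))
    ((nhdsWithin 0 (Set.Ioi 0)) ×ˢ (nhds w))

/-! Write `p = 1/(1-θ)` and take `w` with `0 < h(w) < ∞`. On a cone `x̄ + τ·B(w, δ)` the function
stays above `c + a τ^p`, while frequently as `(τ, w') → (0⁺, w)` its value at `y = x̄ + τ w'` is
below `c + b τ^p`. Minimizing `f + λ‖· - y‖²` over a ball of radius `~ τ` around `y` yields a point
`z` with `f z - c > a τ^p` carrying the regular subgradient `2λ(y - z)` of norm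
`≲ τ^(p-1) = τ^(pθ)`. A KŁ inequality with exponent `θ'` would give `τ^(pθ') ≲ τ^(pθ)` for
arbitrarily small `τ`, which fails when `θ' < θ`. -/

open Metric Set

namespace EReal

lemma coe_lt_coe_inv_mul_sub_iff {d : ℝ} (hd : 0 < d) (t c : ℝ) (x : EReal) :
    (t : EReal) < ((d⁻¹ : ℝ) : EReal) * (x - c) ↔ ((c + t * d : ℝ) : EReal) < x := by
  induction x using EReal.rec with
  | bot => simp only [bot_sub, coe_mul_bot_of_pos (inv_pos.2 hd), not_lt_bot]
  | top => simp only [top_sub_coe, coe_mul_top_of_pos (inv_pos.2 hd), coe_lt_top]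
  | coe x =>
    norm_cast
    rw [inv_mul_eq_div, lt_div_iff₀ hd]
    constructor <;> intro h <;> linarith

lemma coe_inv_mul_sub_lt_coe_iff {d : ℝ} (hd : 0 < d) (t c : ℝ) (x : EReal) :
    ((d⁻¹ : ℝ) : EReal) * (x - c) < t ↔ x < ((c + t * d : ℝ) : EReal) := by
  induction x using EReal.rec with
  | bot => simp only [bot_sub, coe_mul_bot_of_pos (inv_pos.2 hd), bot_lt_coe]
  | top => simp only [top_sub_coe, coe_mul_top_of_pos (inv_pos.2 hd), not_top_lt]
  | coe x =>
    norm_cast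
    rw [inv_mul_eq_div, div_lt_iff₀ hd]
    constructor <;> intro h <;> linarith

end EReal

section

variable {n : ℕ}

lemma regSubgrad_subset_limSubgrad (f : En n → EReal) (x : En n) :
    RegSubgrad f x ⊆ LimSubgrad f x := fun v hv =>
  ⟨fun _ => x, fun _ => v, tendsto_const_nhds, tendsto_const_nhds, tendsto_const_nhds,
    fun _ => hv⟩

lemma le_norm_of_ofReal_le_distZero {S : Set (En n)} {A : ℝ}
    (h : ENNReal.ofReal A ≤ DistZero S) {v : En n} (hv : v ∈ S) : A ≤ ‖v‖ := by
  have : ENNReal.ofReal A ≤ ENNReal.ofReal ‖v‖ := by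
    rw [← dist_zero_left, ← edist_dist]
    exact h.trans (Metric.infEDist_le_edist_of_mem hv)
  exact (ENNReal.ofReal_le_ofReal_iff (norm_nonneg v)).1 this

lemma mul_rpow_le_norm_of_kl {f : En n → EReal} {xb z v : En n} {c zf κ θ' ε ν : ℝ}
    (hKL : ∀ x : En n, ‖x - xb‖ ≤ ε → f x < (c : ℝ) + (ν : ℝ) →
      ENNReal.ofReal (κ * (max (f x - (c : ℝ)).toReal 0) ^ θ') ≤ DistZero (LimSubgrad f x))
    (hzx : ‖z - xb‖ ≤ ε) (hzf : f z = zf) (hcz : c ≤ zf) (hzν : zf < c + ν)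
    (hv : v ∈ RegSubgrad f z) :
    κ * (zf - c) ^ θ' ≤ ‖v‖ := by
  have hgap : max (f z - c).toReal 0 = zf - c := by
    rw [hzf, ← EReal.coe_sub, EReal.toReal_coe, max_eq_left (sub_nonneg.2 hcz)]
  have := hKL z hzx (by rw [hzf]; exact_mod_cast hzν)
  rw [hgap] at this
  exact le_norm_of_ofReal_le_distZero this (regSubgrad_subset_limSubgrad f z hv)

lemma smul_sub_mem_regSubgrad {f : En n → EReal} {y z : En n} {lam δ : ℝ} (hlam : 0 < lam)
    (hδ : 0 < δ)
    (hmin : ∀ u, ‖u - z‖ < δ → f z + ((lam * (‖z - y‖ ^ 2 - ‖u - y‖ ^ 2) : ℝ) : EReal) ≤ f u) :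
    (2 * lam) • (y - z) ∈ RegSubgrad f z := by
  intro ε hε
  refine ⟨min δ (ε / lam), lt_min hδ (div_pos hε hlam), fun u hu _ => ?_⟩
  refine le_trans ?_ (hmin u (hu.trans_le (min_le_left _ _)))
  gcongr
  have hsmall : lam * ‖u - z‖ ≤ ε :=
    (le_div_iff₀' hlam).1 (hu.trans_le (min_le_right _ _)).le
  -- `⟪2λ(y - z), u - z⟫ - λ‖u - z‖² = λ(‖z - y‖² - ‖u - y‖²)`
  have hexpand : ‖u - y‖ ^ 2 = ‖u - z‖ ^ 2 - 2 * inner ℝ (u - z) (y - z) + ‖y - z‖ ^ 2 := by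
    rw [← norm_sub_sq_real, sub_sub_sub_cancel_right]
  rw [real_inner_smul_left, real_inner_comm, hexpand, norm_sub_rev z y]
  nlinarith [norm_nonneg (u - z)]

lemma lowerSemicontinuousOn_toReal_of_isClosed_sublevel {X : Type*} [TopologicalSpace X]
    {f : X → EReal} {B : Set X} {M : ℝ}
    (hclosed : ∀ α : ℝ, α ≤ M → IsClosed {u | u ∈ B ∧ f u ≤ α}) (hbot : ∀ u ∈ B, f u ≠ ⊥) :
    LowerSemicontinuousOn (fun u => (f u).toReal) {u | u ∈ B ∧ f u ≤ M} := by
  have hfin : ∀ u ∈ B, f u ≤ M → f u = ((f u).toReal : EReal) := fun u hu huM =>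
    (EReal.coe_toReal (ne_top_of_le_ne_top (EReal.coe_ne_top _) huM) (hbot u hu)).symm
  refine lowerSemicontinuousOn_iff_preimage_Iic.2 fun b =>
    ⟨_, hclosed (min b M) (min_le_right _ _), Set.ext fun u => ?_⟩
  simp only [mem_inter_iff, mem_ofPred_eq, mem_preimage, mem_Iic]
  constructor
  · rintro ⟨⟨hu, huM⟩, hub⟩
    refine ⟨⟨hu, huM⟩, hu, ?_⟩
    rw [hfin u hu huM]
    exact_mod_cast le_min hub (EReal.coe_le_coe_iff.1 (hfin u hu huM ▸ huM))
  · rintro ⟨⟨hu, huM⟩, -, hub⟩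
    refine ⟨⟨hu, huM⟩, ?_⟩
    rw [hfin u hu huM] at hub
    exact (EReal.coe_le_coe_iff.1 hub).trans (min_le_left _ _)

lemma exists_near_smul_sub_mem_regSubgrad {f : En n → EReal} {y : En n} {r lam m : ℝ}
    (hr : 0 < r) (hlam : 0 < lam)
    (hclosed : ∀ α : ℝ, (α : EReal) ≤ f y → IsClosed {u | u ∈ closedBall y r ∧ f u ≤ α})
    (hlow : ∀ u ∈ closedBall y r, (m : EReal) < f u)
    (hgap : f y < ((m + lam * r ^ 2 : ℝ) : EReal)) :
    ∃ z, ‖z - y‖ < r ∧ f z ≤ f y ∧ (2 * lam) • (y - z) ∈ RegSubgrad f z := by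
  have hy : y ∈ closedBall y r := mem_closedBall_self hr.le
  obtain ⟨yf, hyf⟩ : ∃ yf : ℝ, f y = yf :=
    ⟨_, (EReal.coe_toReal hgap.ne_top (hlow y hy).ne_bot).symm⟩
  set K := {u | u ∈ closedBall y r ∧ f u ≤ yf}
  have hfin : ∀ u ∈ K, f u = ((f u).toReal : EReal) := fun u hu =>
    (EReal.coe_toReal (ne_top_of_le_ne_top (EReal.coe_ne_top _) hu.2) (hlow u hu.1).ne_bot).symm
  have hlsc : LowerSemicontinuousOn (fun u => (f u).toReal + lam * ‖u - y‖ ^ 2) K :=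
    (lowerSemicontinuousOn_toReal_of_isClosed_sublevel
      (fun α hα => hclosed α (hyf ▸ EReal.coe_le_coe hα)) fun u hu => (hlow u hu).ne_bot).add
      ((Continuous.lowerSemicontinuous
        (by fun_prop : Continuous fun u : En n => lam * ‖u - y‖ ^ 2)).lowerSemicontinuousOn _)
  obtain ⟨z, hzK, hzmin⟩ := hlsc.exists_isMinOn ⟨y, show y ∈ K from ⟨hy, hyf.le⟩⟩
    ((isCompact_closedBall y r).of_isClosed_subset (hclosed yf hyf.ge) fun u hu => hu.1)
  have hzf := hfin z hzK
  have hzy_le : (f z).toReal + lam * ‖z - y‖ ^ 2 ≤ yf := by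
    simpa [hyf] using hzmin ⟨hy, hyf.le⟩
  have key : ∀ u ∈ closedBall y r,
      f z + ((lam * (‖z - y‖ ^ 2 - ‖u - y‖ ^ 2) : ℝ) : EReal) ≤ f u := by
    intro u hu
    rw [hzf, ← EReal.coe_add]
    by_cases huy : f u ≤ yf
    · rw [hfin u ⟨hu, huy⟩, EReal.coe_le_coe_iff]
      have := hzmin ⟨hu, huy⟩
      simp only [mem_ofPred_eq] at this
      nlinarith
    · refine le_trans ?_ (not_le.1 huy).le
      rw [EReal.coe_le_coe_iff]
      nlinarith [norm_nonneg (u - y)]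
  have hzy : ‖z - y‖ < r := by
    have hmz : m < (f z).toReal := by exact_mod_cast hzf ▸ hlow z hzK.1
    have hgap' : yf < m + lam * r ^ 2 := by exact_mod_cast hyf ▸ hgap
    have : ‖z - y‖ ^ 2 < r ^ 2 := by nlinarith
    exact lt_of_pow_lt_pow_left₀ 2 hr.le this
  refine ⟨z, hzy, hyf ▸ hzK.2, smul_sub_mem_regSubgrad hlam (sub_pos.2 hzy) fun u hu => key u ?_⟩
  calc dist u y ≤ ‖u - z‖ + ‖z - y‖ := by
        rw [dist_eq_norm]; exact norm_sub_le_norm_sub_add_norm_sub _ _ _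
    _ ≤ r := by linarith

lemma exists_regSubgrad_norm_le_of_sandwich {f : En n → EReal} {y : En n} {r m M : ℝ}
    (hr : 0 < r)
    (hclosed : ∀ α : ℝ, (α : EReal) ≤ f y → IsClosed {u | u ∈ closedBall y r ∧ f u ≤ α})
    (hlow : ∀ u ∈ closedBall y r, (m : EReal) < f u) (hup : f y < (M : EReal)) :
    ∃ z, ‖z - y‖ < r ∧ f z ≤ f y ∧ ∃ v ∈ RegSubgrad f z, ‖v‖ ≤ 2 * (M - m) / r := by
  have hmM : m < M := by exact_mod_cast (hlow y (mem_closedBall_self hr.le)).trans hup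
  have hlam : 0 < (M - m) / r ^ 2 := by have := sub_pos.2 hmM; positivity
  obtain ⟨z, hzy, hzf, hv⟩ := exists_near_smul_sub_mem_regSubgrad hr hlam hclosed hlow
    (by rwa [div_mul_cancel₀ _ (by positivity), add_sub_cancel])
  refine ⟨z, hzy, hzf, _, hv, ?_⟩
  rw [norm_smul, Real.norm_of_nonneg (by positivity), norm_sub_rev]
  calc 2 * ((M - m) / r ^ 2) * ‖z - y‖ ≤ 2 * ((M - m) / r ^ 2) * r := by gcongr
    _ = 2 * (M - m) / r := by field_simp

lemma isClosed_closedBall_inter_sublevel {f : En n → EReal} {x y : En n} {ε r α : ℝ}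
    (hclosed : ∀ α : ℝ, (α : EReal) ≤ f x + ε → IsClosed {y | ‖y - x‖ ≤ ε ∧ f y ≤ α})
    (hball : closedBall y r ⊆ closedBall x ε) (hα : (α : EReal) ≤ f x + ε) :
    IsClosed {u | u ∈ closedBall y r ∧ f u ≤ α} := by
  have : {u | u ∈ closedBall y r ∧ f u ≤ α} = closedBall y r ∩ {y | ‖y - x‖ ≤ ε ∧ f y ≤ α} :=
    Set.ext fun u => ⟨fun hu => ⟨hu.1, mem_closedBall_iff_norm.1 (hball hu.1), hu.2⟩,
      fun hu => ⟨hu.1, hu.2.2⟩⟩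
  exact this ▸ isClosed_closedBall.inter (hclosed α hα)

lemma eventually_mul_rpow_lt_mul_rpow {α β C D : ℝ} (hαβ : α < β) (hD : 0 < D) :
    ∀ᶠ τ in 𝓝[>] (0 : ℝ), C * τ ^ β < D * τ ^ α := by
  have hlim : Tendsto (fun τ : ℝ => C * τ ^ (β - α)) (𝓝[>] 0) (𝓝 0) := by
    have := (Real.continuousAt_rpow_const 0 (β - α) (Or.inr (sub_pos.2 hαβ).le)).tendsto
    simpa [Real.zero_rpow (sub_pos.2 hαβ).ne'] using
      (this.const_mul C).mono_left nhdsWithin_le_nhds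
  filter_upwards [hlim.eventually (gt_mem_nhds hD), self_mem_nhdsWithin] with τ hτ hτ0
  calc C * τ ^ β = C * τ ^ (β - α) * τ ^ α := by
        rw [mul_assoc, ← Real.rpow_add hτ0, sub_add_cancel]
    _ < D * τ ^ α := mul_lt_mul_of_pos_right hτ (Real.rpow_pos_of_pos hτ0 α)

lemma eventually_mul_rpow_lt {p C ε : ℝ} (hp : 0 < p) (hε : 0 < ε) :
    ∀ᶠ τ in 𝓝[>] (0 : ℝ), C * τ ^ p < ε := by
  simpa using eventually_mul_rpow_lt_mul_rpow (C := C) (α := 0) hp hε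

lemma exists_forall_ball_of_eventually_prod {E : Type*} [NormedAddCommGroup E]
    [NormedSpace ℝ E] {P : ℝ → E → Prop} {x w : E}
    (h : ∀ᶠ q in 𝓝[>] (0 : ℝ) ×ˢ 𝓝 w, P q.1 (x + q.1 • q.2)) :
    ∃ δ > 0, ∀ τ ∈ Ioo 0 δ, ∀ u ∈ ball (x + τ • w) (τ * δ), P τ u := by
  obtain ⟨⟨d₁, d₂⟩, ⟨hd₁, hd₂⟩, hd⟩ :=
    ((nhdsGT_basis (0 : ℝ)).prod nhds_basis_ball).eventually_iff.1 h
  refine ⟨min d₁ d₂, lt_min hd₁ hd₂, fun τ ⟨hτ0, hτδ⟩ u hu => ?_⟩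
  have hw : τ⁻¹ • (u - x) ∈ ball w d₂ := by
    rw [mem_ball, dist_eq_norm] at hu ⊢
    rw [← inv_smul_smul₀ hτ0.ne' w, ← smul_sub, sub_sub, norm_smul, norm_inv,
      Real.norm_of_nonneg hτ0.le, inv_mul_lt_iff₀ hτ0]
    exact hu.trans_le (mul_le_mul_of_nonneg_left (min_le_right _ _) hτ0.le)
  simpa [smul_inv_smul₀ hτ0.ne'] using
    @hd (τ, τ⁻¹ • (u - x)) ⟨⟨hτ0, hτδ.trans_le (min_le_left _ _)⟩, hw⟩

section ThetaSubderiv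

variable {f : En n → EReal} {x w : En n} {c θ t : ℝ}

lemma eventually_lt_of_lt_thetaSubderiv (hfc : f x = c) (hθ : θ < 1)
    (ht : (t : EReal) < ThetaSubderiv f x θ w) :
    ∀ᶠ q in 𝓝[>] (0 : ℝ) ×ˢ 𝓝 w,
      ((c + t * (1 - θ) * q.1 ^ (1 / (1 - θ)) : ℝ) : EReal) < f (x + q.1 • q.2) := by
  filter_upwards [eventually_lt_of_lt_liminf ht (by isBoundedDefault),
    tendsto_fst.eventually self_mem_nhdsWithin] with q hq hq0
  rwa [hfc, EReal.coe_lt_coe_inv_mul_sub_iff (by have := sub_pos.2 hθ; positivity),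
    ← mul_assoc] at hq

lemma frequently_lt_of_thetaSubderiv_lt (hfc : f x = c) (hθ : θ < 1)
    (ht : ThetaSubderiv f x θ w < t) :
    ∃ᶠ q in 𝓝[>] (0 : ℝ) ×ˢ 𝓝 w,
      f (x + q.1 • q.2) < ((c + t * (1 - θ) * q.1 ^ (1 / (1 - θ)) : ℝ) : EReal) := by
  refine ((frequently_lt_of_liminf_lt (by isBoundedDefault) ht).and_eventually
    (tendsto_fst.eventually self_mem_nhdsWithin)).mono fun q ⟨hq, hq0⟩ => ?_
  rwa [hfc, EReal.coe_inv_mul_sub_lt_coe_iff (by have := sub_pos.2 hθ; positivity),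
    ← mul_assoc] at hq

end ThetaSubderiv

lemma exists_regSubgrad_of_cone_sandwich {f : En n → EReal} {x w w' : En n}
    {ε₀ τ δ m M : ℝ}
    (hclosed : ∀ α : ℝ, (α : EReal) ≤ f x + ε₀ → IsClosed {y | ‖y - x‖ ≤ ε₀ ∧ f y ≤ α})
    (hτ : 0 < τ) (hw' : ‖w' - w‖ < δ / 2) (hτε₀ : (δ / 4 + ‖w‖ + δ) * τ ≤ ε₀)
    (hMε₀ : (M : EReal) ≤ f x + ε₀)
    (hlower : ∀ u ∈ ball (x + τ • w) (τ * δ), (m : EReal) < f u)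
    (hup : f (x + τ • w') < M) :
    ∃ z, ‖z - x‖ ≤ (δ / 4 + ‖w‖ + δ) * τ ∧ (m : EReal) < f z ∧ f z < M ∧
      ∃ v ∈ RegSubgrad f z, ‖v‖ ≤ 8 * (M - m) / (δ * τ) := by
  have hδ : 0 < δ := by linarith [norm_nonneg (w' - w)]
  set y := x + τ • w'
  have hball : closedBall y (δ / 4 * τ) ⊆ ball (x + τ • w) (τ * δ) := by
    refine closedBall_subset_ball' ?_
    rw [dist_add_left, dist_smul₀, Real.norm_of_nonneg hτ.le, dist_eq_norm]
    nlinarith [mul_lt_mul_of_pos_left hw' hτ]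
  have hball' : closedBall y (δ / 4 * τ) ⊆ closedBall x ((δ / 4 + ‖w‖ + δ) * τ) := by
    refine closedBall_subset_closedBall' ?_
    rw [dist_self_add_left, norm_smul, Real.norm_of_nonneg hτ.le]
    nlinarith [norm_le_norm_add_norm_sub' w' w]
  obtain ⟨z, hzy, hzf, v, hv, hvn⟩ := exists_regSubgrad_norm_le_of_sandwich (by positivity)
    (fun α hα => isClosed_closedBall_inter_sublevel hclosed
      (hball'.trans (closedBall_subset_closedBall hτε₀)) (hα.trans (hup.le.trans hMε₀)))
    (fun u hu => hlower u (hball hu)) hup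
  have hz : z ∈ closedBall y (δ / 4 * τ) := mem_closedBall_iff_norm.2 hzy.le
  refine ⟨z, mem_closedBall_iff_norm.1 (hball' hz), hlower z (hball hz), hzf.trans_lt hup, v, hv,
    hvn.trans_eq ?_⟩
  field_simp
  ring

theorem frequently_exists_regSubgrad_of_thetaSubderiv {f : En n → EReal} {x w : En n}
    {c θ : ℝ} (hfc : f x = c) (hloc : LocallyLsc f x) (hθ : θ < 1)
    (hw0 : 0 < ThetaSubderiv f x θ w) (hwtop : ThetaSubderiv f x θ w < ⊤) :
    ∃ a > 0, ∃ C > 0, ∃ᶠ τ in 𝓝[>] (0 : ℝ), ∃ z v, ‖z - x‖ ≤ C * τ ∧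
      ((c + a * τ ^ (1 / (1 - θ)) : ℝ) : EReal) < f z ∧
      f z < ((c + C * τ ^ (1 / (1 - θ)) : ℝ) : EReal) ∧
      v ∈ RegSubgrad f z ∧ ‖v‖ ≤ C * τ ^ (1 / (1 - θ) - 1) := by
  set p := 1 / (1 - θ)
  have hp : 0 < p := one_div_pos.2 (sub_pos.2 hθ)
  obtain ⟨ε₀, hε₀, hclosed⟩ := hloc
  obtain ⟨l, hl⟩ : ∃ l : ℝ, ThetaSubderiv f x θ w = l :=
    ⟨_, (EReal.coe_toReal hwtop.ne hw0.ne_bot).symm⟩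
  have hl0 : 0 < l := by exact_mod_cast hl ▸ hw0
  set a := l / 2 * (1 - θ)
  set b := (l + 1) * (1 - θ)
  obtain ⟨δ, hδ, hlower⟩ := exists_forall_ball_of_eventually_prod
    (P := fun τ u => ((c + a * τ ^ p : ℝ) : EReal) < f u)
    (eventually_lt_of_lt_thetaSubderiv hfc hθ (t := l / 2)
      (by rw [hl]; exact_mod_cast half_lt_self hl0))
  have hupper := frequently_lt_of_thetaSubderiv_lt hfc hθ (t := l + 1)
    (by rw [hl]; exact_mod_cast lt_add_one l)
  set K := δ / 4 + ‖w‖ + δ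
  set C := max K (max b (8 * (b - a) / δ))
  have hsmall : ∀ᶠ q in 𝓝[>] (0 : ℝ) ×ˢ 𝓝 w,
      q.1 ∈ Ioo 0 δ ∧ ‖q.2 - w‖ < δ / 2 ∧ K * q.1 < ε₀ ∧ b * q.1 ^ p < ε₀ := by
    filter_upwards [tendsto_fst.eventually (Ioo_mem_nhdsGT hδ),
      tendsto_snd.eventually (ball_mem_nhds w (half_pos hδ)),
      tendsto_fst.eventually (by simpa using eventually_mul_rpow_lt (C := K) one_pos hε₀),
      tendsto_fst.eventually (eventually_mul_rpow_lt hp hε₀)] with q h₁ h₂ h₃ h₄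
    exact ⟨h₁, mem_ball_iff_norm.1 h₂, h₃, h₄⟩
  refine ⟨a, by positivity, C, by positivity, (tendsto_fst (g := 𝓝 w)).frequently ?_⟩
  refine (hupper.and_eventually hsmall).mono ?_
  rintro ⟨τ, w'⟩ ⟨hup, hτ, hw', hKε, hbε⟩
  dsimp only at hup hτ hw' hKε hbε ⊢
  obtain ⟨z, hzx, hzlow, hzup, v, hv, hvn⟩ := exists_regSubgrad_of_cone_sandwich hclosed hτ.1 hw'
    hKε.le (by rw [hfc]; exact_mod_cast (by linarith)) (hlower τ hτ) hup
  have hbC : b ≤ C := (le_max_left _ _).trans (le_max_right _ _)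
  refine ⟨z, v, hzx.trans (mul_le_mul_of_nonneg_right (le_max_left _ _) hτ.1.le), hzlow,
    hzup.trans_le (EReal.coe_le_coe (add_le_add_right (mul_le_mul_of_nonneg_right hbC
      (Real.rpow_nonneg hτ.1.le p)) c)), hv, hvn.trans ?_⟩
  calc 8 * (c + b * τ ^ p - (c + a * τ ^ p)) / (δ * τ) = 8 * (b - a) / δ * τ ^ (p - 1) := by
        rw [Real.rpow_sub_one hτ.1.ne']; field_simp; ring
    _ ≤ C * τ ^ (p - 1) :=
        mul_le_mul_of_nonneg_right ((le_max_right _ _).trans (le_max_right _ _))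
          (Real.rpow_nonneg hτ.1.le _)

end

theorem statement_8_general {n : ℕ} (f : En n → EReal)
    (xb : En n) (c : ℝ) (hfc : f xb = (c : ℝ)) (hloc : LocallyLsc f xb)
    (θ : ℝ) (hθ1 : θ < 1)
    (h : En n → EReal) (hh : h = fun w => ThetaSubderiv f xb θ w)
    (hW : ∃ w : En n, (0 : EReal) < h w ∧ h w < ⊤) :
    ∀ θ' : ℝ, 0 ≤ θ' → θ' < θ →
      ¬ ∃ μ : ℝ, 0 < μ ∧ ∃ ε : ℝ, 0 < ε ∧ ∃ ν : ℝ, 0 < ν ∧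
        ∀ x : En n, ‖x - xb‖ ≤ ε → f x < (c : ℝ) + (ν : ℝ) →
          ENNReal.ofReal ((μ / (1 - θ')) * (max (f x - (c : ℝ)).toReal 0) ^ θ') ≤
            DistZero (LimSubgrad f x) := by
  rintro θ' hθ'0 hθ'θ ⟨μ, hμ, ε, hε, ν, hν, hKL⟩
  obtain ⟨w, hw0, hwtop⟩ := hW
  subst hh
  obtain ⟨a, ha, C, hC, hfreq⟩ :=
    frequently_exists_regSubgrad_of_thetaSubderiv hfc hloc hθ1 hw0 hwtop
  set p := 1 / (1 - θ)
  set μ' := μ / (1 - θ')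
  have hμ' : 0 < μ' := div_pos hμ (by linarith)
  have hp : 0 < p := one_div_pos.2 (sub_pos.2 hθ1)
  have hexp : p * θ' < p - 1 := by
    have : p - 1 = p * θ := by simp only [p]; field_simp [(sub_pos.2 hθ1).ne']; ring
    rw [this]; exact mul_lt_mul_of_pos_left hθ'θ hp
  have hsmall : ∀ᶠ τ in 𝓝[>] (0 : ℝ), C * τ < ε ∧ C * τ ^ p < ν ∧
      C * τ ^ (p - 1) < μ' * a ^ θ' * τ ^ (p * θ') ∧ 0 < τ := by
    filter_upwards [show ∀ᶠ τ in 𝓝[>] (0 : ℝ), C * τ < ε by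
        simpa using eventually_mul_rpow_lt (C := C) one_pos hε,
      eventually_mul_rpow_lt hp hν,
      eventually_mul_rpow_lt_mul_rpow (C := C) hexp (by positivity : 0 < μ' * a ^ θ'),
      self_mem_nhdsWithin] with τ h₁ h₂ h₃ h₄ using ⟨h₁, h₂, h₃, h₄⟩
  obtain ⟨τ, ⟨z, v, hzx, hzlow, hzup, hv, hvn⟩, hτε, hτν, hτKL, hτ0⟩ :=
    (hfreq.and_eventually hsmall).exists
  have hτp : 0 < τ ^ p := Real.rpow_pos_of_pos hτ0 p
  obtain ⟨zf, hzf⟩ : ∃ zf : ℝ, f z = zf :=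
    ⟨_, (EReal.coe_toReal hzup.ne_top hzlow.ne_bot).symm⟩
  rw [hzf, EReal.coe_lt_coe_iff] at hzlow hzup
  have hKLz : μ' * a ^ θ' * τ ^ (p * θ') ≤ C * τ ^ (p - 1) :=
    calc μ' * a ^ θ' * τ ^ (p * θ') ≤ μ' * (zf - c) ^ θ' := by
          rw [mul_assoc, Real.rpow_mul hτ0.le, ← Real.mul_rpow ha.le hτp.le]
          gcongr
          linarith
      _ ≤ ‖v‖ := mul_rpow_le_norm_of_kl hKL (hzx.trans hτε.le) hzf (by nlinarith) (by linarith) hv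
      _ ≤ C * τ ^ (p - 1) := hvn
  exact hKLz.not_gt hτKL

/-- if `W = {w : 0 < h(w) < ∞} ≠ ∅` for the `1/(1-θ)`-th
subderivative `h`, then `f` fails the KŁ property at `xb` with every
exponent `θ' ∈ [0, θ)`. -/
theorem statement_8 {n : ℕ} (f : En n → EReal) (hbot : ∀ x, f x ≠ ⊥)
    (xb : En n) (c : ℝ) (hfc : f xb = (c : ℝ)) (hloc : LocallyLsc f xb)
    (θ : ℝ) (hθ0 : 0 ≤ θ) (hθ1 : θ < 1)
    (h : En n → EReal) (hh : h = fun w => ThetaSubderiv f xb θ w)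
    (hW : ∃ w : En n, (0 : EReal) < h w ∧ h w < ⊤) :
    ∀ θ' : ℝ, 0 ≤ θ' → θ' < θ →
      ¬ ∃ μ : ℝ, 0 < μ ∧ ∃ ε : ℝ, 0 < ε ∧ ∃ ν : ℝ, 0 < ν ∧
        ∀ x : En n, ‖x - xb‖ ≤ ε → f x < (c : ℝ) + (ν : ℝ) →
          ENNReal.ofReal ((μ / (1 - θ')) * (max (f x - (c : ℝ)).toReal 0) ^ θ') ≤
            DistZero (LimSubgrad f x) :=
  statement_8_general f xb c hfc hloc θ hθ1 h hh hW
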